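/- Let N ≥ 3 be an integer, N/(N−1) < p < 2, α := (p−1)(N−1), β := (p−1)/(α−1), σ := (2−p)/(p−1), and for t > 0 let u_t(x) := ∫_{|x|}^1 (β y + t y^α)^{−1/(p−1)} dy on B_1 \ {0}. Then there exists C > 0 such that for all R ∈ (0,1), t > 1, and all continuously differentiable functions φ_1, φ_2 on B_1 \ {0} with ‖φ_i‖_X := sup_{x∈B_1} ( |x|^σ|φ_i(x)| + |x|^{σ+1}|∇φ_i(x)| ) ≤ R for i = 1, 2, the function I(x) := |∇u_t + ∇φ_2|^p − p|∇u_t|^{p−2}∇u_t·∇φ_2 − |∇u_t + ∇φ_1|^p + p|∇u_t|^{p−2}∇u_t·∇φ_1 (evaluated at x) satisfies sup_{x∈B_1} |x|^{σ+2}|I(x)| ≤ C R^{p−1} ‖φ_2 − φ_1‖_X. -/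

import Mathlib

open Metric Filter Set
open scoped Topology

/-!
`I` is the difference `Q(v, b) - Q(v, a)` of first-order Taylor remainders of `G = ‖·‖ ^ p` at
`v = ∇u_t(x)`. For `1 < p < 2` the map `∇G(y) = p ‖y‖ ^ (p - 2) y` is `(p - 1)`-Hölder on the
whole space, so the mean value inequality gives
`|Q(v, b) - Q(v, a)| ≤ 4 p max(‖a‖, ‖b‖) ^ (p - 1) ‖b - a‖` uniformly in `v`.
The choice `σ = (2 - p) / (p - 1)` makes `‖x‖ ^ (σ + 2)` equal to `(‖x‖ ^ (σ + 1)) ^ p`,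
which turns this into the weighted estimate with `C = 4 p`.
-/

section NormRpow

variable {E : Type*} [NormedAddCommGroup E] [InnerProductSpace ℝ E]

theorem hasFDerivAt_norm_rpow_of_ne_zero (q : ℝ) {x : E} (hx : x ≠ 0) :
    HasFDerivAt (fun y : E ↦ ‖y‖ ^ q) ((q * ‖x‖ ^ (q - 2)) • innerSL ℝ x) x := by
  convert! ((hasStrictFDerivAt_norm_sq x).rpow_const (p := q / 2) (by simp [hx])).hasFDerivAt
    using 0
  simp_rw [← Real.rpow_natCast_mul (norm_nonneg _), ← Nat.cast_smul_eq_nsmul ℝ, smul_smul]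
  ring_nf

theorem hasFDerivAt_norm_rpow_smul_self (q : ℝ) {x : E} (hx : x ≠ 0) :
    HasFDerivAt (fun y : E ↦ ‖y‖ ^ q • y) (‖x‖ ^ q • ContinuousLinearMap.id ℝ E
      + ((q * ‖x‖ ^ (q - 2)) • innerSL ℝ x).smulRight x) x :=
  (hasFDerivAt_norm_rpow_of_ne_zero q hx).smul (hasFDerivAt_id x)

theorem norm_fderiv_norm_rpow_smul_self_le (q : ℝ) {x : E} (hx : x ≠ 0) :
    ‖fderiv ℝ (fun y : E ↦ ‖y‖ ^ q • y) x‖ ≤ (1 + |q|) * ‖x‖ ^ q := by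
  have hx' : 0 < ‖x‖ := norm_pos_iff.2 hx
  rw [(hasFDerivAt_norm_rpow_smul_self q hx).fderiv]
  calc _ ≤ ‖‖x‖ ^ q • ContinuousLinearMap.id ℝ E‖
        + ‖((q * ‖x‖ ^ (q - 2)) • innerSL ℝ x).smulRight x‖ := norm_add_le _ _
    _ ≤ ‖x‖ ^ q + |q| * ‖x‖ ^ (q - 2) * ‖x‖ * ‖x‖ := by
      gcongr
      · rw [norm_smul, Real.norm_of_nonneg (by positivity)]
        exact mul_le_of_le_one_right (by positivity) ContinuousLinearMap.norm_id_le
      · rw [ContinuousLinearMap.norm_smulRight_apply, norm_smul, innerSL_apply_norm, norm_mul,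
          Real.norm_of_nonneg (by positivity : 0 ≤ ‖x‖ ^ (q - 2)), Real.norm_eq_abs]
    _ = (1 + |q|) * ‖x‖ ^ q := by
      rw [mul_assoc _ ‖x‖, ← sq, mul_assoc, ← Real.rpow_natCast, ← Real.rpow_add hx']
      push_cast; ring_nf

theorem norm_rpow_smul_self {p : ℝ} (hp : p ≠ 1) (x : E) :
    ‖‖x‖ ^ (p - 2) • x‖ = ‖x‖ ^ (p - 1) := by
  obtain rfl | hx := eq_or_ne x 0
  · simp [Real.zero_rpow (sub_ne_zero.2 hp)]
  rw [norm_smul, Real.norm_of_nonneg (by positivity), ← Real.rpow_add_one (norm_ne_zero_iff.2 hx)]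
  ring_nf

theorem norm_rpow_smul_self_sub_le {p : ℝ} (hp1 : 1 < p) (hp2 : p < 2) (ξ η : E) :
    ‖‖ξ‖ ^ (p - 2) • ξ - ‖η‖ ^ (p - 2) • η‖ ≤ 4 * ‖ξ - η‖ ^ (p - 1) := by
  wlog hle : ‖η‖ ≤ ‖ξ‖ generalizing ξ η
  · rw [norm_sub_rev (‖ξ‖ ^ (p - 2) • ξ), norm_sub_rev ξ]
    exact this η ξ (le_of_not_ge hle)
  obtain rfl | hne := eq_or_ne ξ η
  · simp [Real.zero_rpow (by linarith : p - 1 ≠ 0)]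
  set d := ‖ξ - η‖
  have hd : 0 < d := norm_pos_iff.2 (sub_ne_zero.2 hne)
  -- Near the origin both terms are `O(d ^ (p - 1))`; away from it, `closedBall ξ d` avoids `0`
  -- and the mean value inequality applies there.
  rcases le_or_gt ‖ξ‖ (2 * d) with hnear | hfar
  · have h2 : (2 : ℝ) ^ (p - 1) ≤ 2 := by
      simpa using Real.rpow_le_rpow_of_exponent_le one_le_two (by linarith : p - 1 ≤ 1)
    calc _ ≤ ‖ξ‖ ^ (p - 1) + ‖η‖ ^ (p - 1) := by
          rw [← norm_rpow_smul_self hp1.ne' ξ, ← norm_rpow_smul_self hp1.ne' η]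
          exact norm_sub_le _ _
      _ ≤ (2 * d) ^ (p - 1) + (2 * d) ^ (p - 1) := by gcongr; linarith
      _ = 2 * 2 ^ (p - 1) * d ^ (p - 1) := by rw [Real.mul_rpow zero_le_two hd.le]; ring
      _ ≤ 4 * d ^ (p - 1) := by nlinarith [Real.rpow_nonneg hd.le (p - 1)]
  · have hball : ∀ y ∈ closedBall ξ d, d ≤ ‖y‖ := fun y hy => by
      have := norm_sub_norm_le ξ y
      rw [mem_closedBall, dist_eq_norm, norm_sub_rev] at hy
      linarith
    have hne0 : ∀ y ∈ closedBall ξ d, y ≠ 0 := fun y hy =>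
      norm_pos_iff.1 (hd.trans_le (hball y hy))
    have hbound : ∀ y ∈ closedBall ξ d,
        ‖fderiv ℝ (fun z : E ↦ ‖z‖ ^ (p - 2) • z) y‖ ≤ 2 * d ^ (p - 2) := fun y hy => by
      refine (norm_fderiv_norm_rpow_smul_self_le _ (hne0 y hy)).trans ?_
      rw [abs_of_neg (by linarith : p - 2 < 0)]
      exact mul_le_mul (by linarith) (Real.rpow_le_rpow_of_nonpos hd (hball y hy) (by linarith))
        (by positivity) zero_le_two
    have hη : η ∈ closedBall ξ d := by rw [mem_closedBall, dist_eq_norm, norm_sub_rev]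
    calc _ ≤ 2 * d ^ (p - 2) * d :=
          (convex_closedBall ξ d).norm_image_sub_le_of_norm_fderiv_le
            (fun y hy => (hasFDerivAt_norm_rpow_smul_self _ (hne0 y hy)).differentiableAt)
            hbound hη (mem_closedBall_self hd.le)
      _ = 2 * d ^ (p - 1) := by
          rw [mul_assoc, ← Real.rpow_add_one hd.ne']; ring_nf
      _ ≤ 4 * d ^ (p - 1) := by nlinarith [Real.rpow_nonneg hd.le (p - 1)]

noncomputable def normRpowRemainder (p : ℝ) (v a : E) : ℝ :=
  ‖v + a‖ ^ p - ‖v‖ ^ p - p * ‖v‖ ^ (p - 2) * inner ℝ v a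

theorem abs_normRpowRemainder_sub_le {p : ℝ} (hp1 : 1 < p) (hp2 : p < 2) (v a b : E) :
    |normRpowRemainder p v b - normRpowRemainder p v a|
      ≤ 4 * p * max ‖a‖ ‖b‖ ^ (p - 1) * ‖b - a‖ := by
  set ρ := max ‖a‖ ‖b‖
  set L : E →L[ℝ] ℝ := (p * ‖v‖ ^ (p - 2)) • innerSL ℝ v
  have hderiv (y : E) : HasFDerivAt (fun z : E ↦ ‖z‖ ^ p - L z)
      ((p * ‖y‖ ^ (p - 2)) • innerSL ℝ y - L) y :=
    (hasFDerivAt_norm_rpow y hp1).sub L.hasFDerivAt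
  have hbound : ∀ y ∈ closedBall v ρ,
      ‖(p * ‖y‖ ^ (p - 2)) • innerSL ℝ y - L‖ ≤ 4 * p * ρ ^ (p - 1) := by
    intro y hy
    have hL : (p * ‖y‖ ^ (p - 2)) • innerSL ℝ y - L
        = innerSL ℝ (p • (‖y‖ ^ (p - 2) • y - ‖v‖ ^ (p - 2) • v)) := by
      ext z
      simp only [L, sub_apply, smul_apply, innerSL_apply_apply, smul_eq_mul,
        real_inner_smul_left, inner_sub_left]
      ring
    rw [hL, innerSL_apply_norm, norm_smul, Real.norm_of_nonneg (by linarith)]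
    rw [mem_closedBall, dist_eq_norm] at hy
    calc p * ‖‖y‖ ^ (p - 2) • y - ‖v‖ ^ (p - 2) • v‖ ≤ p * (4 * ‖y - v‖ ^ (p - 1)) := by
          gcongr; exact norm_rpow_smul_self_sub_le hp1 hp2 y v
      _ ≤ p * (4 * ρ ^ (p - 1)) := by gcongr
      _ = 4 * p * ρ ^ (p - 1) := by ring
  have hmem (c : E) (hc : ‖c‖ ≤ ρ) : v + c ∈ closedBall v ρ := by
    simpa [mem_closedBall, dist_eq_norm] using hc
  have key := (convex_closedBall v ρ).norm_image_sub_le_of_norm_hasFDerivWithin_le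
    (fun y _ ↦ (hderiv y).hasFDerivWithinAt) hbound
    (hmem a (le_max_left _ _)) (hmem b (le_max_right _ _))
  have hQ : normRpowRemainder p v b - normRpowRemainder p v a
      = (‖v + b‖ ^ p - L (v + b)) - (‖v + a‖ ^ p - L (v + a)) := by
    simp only [normRpowRemainder, L, smul_apply, innerSL_apply_apply,
      smul_eq_mul, inner_add_right]
    ring
  rw [hQ, ← Real.norm_eq_abs]
  rwa [add_sub_add_left_eq_sub] at key

theorem rpow_mul_abs_normRpowRemainder_sub_le {p : ℝ} (hp1 : 1 < p) (hp2 : p < 2) (v : E)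
    {a b : E} {w R : ℝ} (hw : 0 ≤ w) (ha : w * ‖a‖ ≤ R) (hb : w * ‖b‖ ≤ R) :
    w ^ p * |normRpowRemainder p v b - normRpowRemainder p v a|
      ≤ 4 * p * R ^ (p - 1) * (w * ‖b - a‖) := by
  have hmax : w * max ‖a‖ ‖b‖ ≤ R := by rw [mul_max_of_nonneg _ _ hw]; exact max_le ha hb
  calc _ ≤ w ^ p * (4 * p * max ‖a‖ ‖b‖ ^ (p - 1) * ‖b - a‖) := by
        gcongr; exact abs_normRpowRemainder_sub_le hp1 hp2 v a b
    _ = 4 * p * (w * max ‖a‖ ‖b‖) ^ (p - 1) * (w * ‖b - a‖) := by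
        rw [Real.mul_rpow hw (by positivity)]
        nth_rw 1 [← sub_add_cancel p 1]
        rw [Real.rpow_add' hw (by linarith), Real.rpow_one]
        ring
    _ ≤ 4 * p * R ^ (p - 1) * (w * ‖b - a‖) := by gcongr

end NormRpow

theorem bddAbove_image_weighted_sub {ι F : Type*} [SeminormedAddCommGroup F] {s : Set ι}
    (w₀ w₁ : ι → ℝ) (hw₀ : ∀ z ∈ s, 0 ≤ w₀ z) (hw₁ : ∀ z ∈ s, 0 ≤ w₁ z)
    {f₁ f₂ : ι → ℝ} {g₁ g₂ : ι → F} {R : ℝ}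
    (h₁ : ∀ z ∈ s, w₀ z * |f₁ z| + w₁ z * ‖g₁ z‖ ≤ R)
    (h₂ : ∀ z ∈ s, w₀ z * |f₂ z| + w₁ z * ‖g₂ z‖ ≤ R) :
    BddAbove ((fun z ↦ w₀ z * |f₂ z - f₁ z| + w₁ z * ‖g₂ z - g₁ z‖) '' s) := by
  refine ⟨R + R, ?_⟩
  rintro _ ⟨z, hz, rfl⟩
  dsimp only
  have := h₁ z hz
  have := h₂ z hz
  calc _ ≤ w₀ z * (|f₂ z| + |f₁ z|) + w₁ z * (‖g₂ z‖ + ‖g₁ z‖) := by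
        gcongr
        exacts [hw₀ z hz, abs_sub _ _, hw₁ z hz, norm_sub_le _ _]
    _ ≤ R + R := by linarith

theorem stmt_15_general (N : ℕ) (hN : 3 ≤ N) (p : ℝ)
    (hp1 : (N : ℝ) / ((N : ℝ) - 1) < p) (hp2 : p < 2)
    (σ : ℝ)
    (hσ : σ = (2 - p) / (p - 1))
    (u : ℝ → EuclideanSpace ℝ (Fin N) → ℝ) :
    ∃ C > (0 : ℝ), ∀ R t : ℝ, 0 < R → R < 1 → 1 < t →
      ∀ φ₁ φ₂ : EuclideanSpace ℝ (Fin N) → ℝ,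
        ContDiffOn ℝ 1 φ₁ (ball (0 : EuclideanSpace ℝ (Fin N)) 1 \ {0}) →
        ContDiffOn ℝ 1 φ₂ (ball (0 : EuclideanSpace ℝ (Fin N)) 1 \ {0}) →
        (∀ x ∈ ball (0 : EuclideanSpace ℝ (Fin N)) 1 \ {0},
          ‖x‖ ^ σ * |φ₁ x| + ‖x‖ ^ (σ + 1) * ‖gradient φ₁ x‖ ≤ R) →
        (∀ x ∈ ball (0 : EuclideanSpace ℝ (Fin N)) 1 \ {0},
          ‖x‖ ^ σ * |φ₂ x| + ‖x‖ ^ (σ + 1) * ‖gradient φ₂ x‖ ≤ R) →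
        ∀ x ∈ ball (0 : EuclideanSpace ℝ (Fin N)) 1 \ {0},
          ‖x‖ ^ (σ + 2) *
            |‖gradient (u t) x + gradient φ₂ x‖ ^ p
              - p * ‖gradient (u t) x‖ ^ (p - 2) *
                  (inner ℝ (gradient (u t) x) (gradient φ₂ x) : ℝ)
              - ‖gradient (u t) x + gradient φ₁ x‖ ^ p
              + p * ‖gradient (u t) x‖ ^ (p - 2) *
                  (inner ℝ (gradient (u t) x) (gradient φ₁ x) : ℝ)| ≤
            C * R ^ (p - 1) *
              sSup ((fun z : EuclideanSpace ℝ (Fin N) =>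
                  ‖z‖ ^ σ * |φ₂ z - φ₁ z|
                    + ‖z‖ ^ (σ + 1) * ‖gradient φ₂ z - gradient φ₁ z‖) ''
                (ball (0 : EuclideanSpace ℝ (Fin N)) 1 \ {0})) := by
  have hp : 1 < p := by
    have hN' : (2 : ℝ) < N := by exact_mod_cast hN
    exact ((one_lt_div (by linarith)).2 (by linarith)).trans hp1
  refine ⟨4 * p, by positivity, fun R t _ _ _ φ₁ φ₂ _ _ h₁ h₂ x hx ↦ ?_⟩
  have hx0 : 0 < ‖x‖ := norm_pos_iff.2 (by simpa using hx.2)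
  have hweight : ‖x‖ ^ (σ + 2) = (‖x‖ ^ (σ + 1)) ^ p := by
    have : p - 1 ≠ 0 := by linarith
    rw [← Real.rpow_mul hx0.le, hσ]
    congr 1
    field_simp
    ring
  have hgrad {φ : EuclideanSpace ℝ (Fin N) → ℝ}
      (h : ‖x‖ ^ σ * |φ x| + ‖x‖ ^ (σ + 1) * ‖gradient φ x‖ ≤ R) :
      ‖x‖ ^ (σ + 1) * ‖gradient φ x‖ ≤ R :=
    (le_add_of_nonneg_left (by positivity)).trans h
  have hsup := le_csSup (bddAbove_image_weighted_sub (fun z ↦ ‖z‖ ^ σ) (fun z ↦ ‖z‖ ^ (σ + 1))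
    (fun _ _ ↦ by positivity) (fun _ _ ↦ by positivity) h₁ h₂) ⟨x, hx, rfl⟩
  calc _ = (‖x‖ ^ (σ + 1)) ^ p * |normRpowRemainder p (gradient (u t) x) (gradient φ₂ x)
          - normRpowRemainder p (gradient (u t) x) (gradient φ₁ x)| := by
        rw [hweight, normRpowRemainder, normRpowRemainder]
        ring_nf
    _ ≤ 4 * p * R ^ (p - 1) * (‖x‖ ^ (σ + 1) * ‖gradient φ₂ x - gradient φ₁ x‖) :=
        rpow_mul_abs_normRpowRemainder_sub_le hp hp2 _ (by positivity) (hgrad (h₁ x hx))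
          (hgrad (h₂ x hx))
    _ ≤ _ := by
        gcongr
        exact (le_add_of_nonneg_left (by positivity)).trans hsup

/-- "Contraction": weighted Lipschitz-type bound for the quadratic remainder,
for `φ₁, φ₂` in the ball of radius `R` of the weighted space `X`:
`‖I‖_Y ≤ C R^{p-1} ‖φ₂ - φ₁‖_X`. -/
theorem stmt_15 (N : ℕ) (hN : 3 ≤ N) (p : ℝ)
    (hp1 : (N : ℝ) / ((N : ℝ) - 1) < p) (hp2 : p < 2)
    (α β σ : ℝ) (hα : α = (p - 1) * ((N : ℝ) - 1)) (hβ : β = (p - 1) / (α - 1))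
    (hσ : σ = (2 - p) / (p - 1))
    (u : ℝ → EuclideanSpace ℝ (Fin N) → ℝ)
    (hu : ∀ (t : ℝ) (x : EuclideanSpace ℝ (Fin N)),
      u t x = ∫ y in (‖x‖)..(1 : ℝ), (β * y + t * y ^ α) ^ (-(1 / (p - 1)))) :
    ∃ C > (0 : ℝ), ∀ R t : ℝ, 0 < R → R < 1 → 1 < t →
      ∀ φ₁ φ₂ : EuclideanSpace ℝ (Fin N) → ℝ,
        ContDiffOn ℝ 1 φ₁ (ball (0 : EuclideanSpace ℝ (Fin N)) 1 \ {0}) →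
        ContDiffOn ℝ 1 φ₂ (ball (0 : EuclideanSpace ℝ (Fin N)) 1 \ {0}) →
        (∀ x ∈ ball (0 : EuclideanSpace ℝ (Fin N)) 1 \ {0},
          ‖x‖ ^ σ * |φ₁ x| + ‖x‖ ^ (σ + 1) * ‖gradient φ₁ x‖ ≤ R) →
        (∀ x ∈ ball (0 : EuclideanSpace ℝ (Fin N)) 1 \ {0},
          ‖x‖ ^ σ * |φ₂ x| + ‖x‖ ^ (σ + 1) * ‖gradient φ₂ x‖ ≤ R) →
        ∀ x ∈ ball (0 : EuclideanSpace ℝ (Fin N)) 1 \ {0},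
          ‖x‖ ^ (σ + 2) *
            |‖gradient (u t) x + gradient φ₂ x‖ ^ p
              - p * ‖gradient (u t) x‖ ^ (p - 2) *
                  (inner ℝ (gradient (u t) x) (gradient φ₂ x) : ℝ)
              - ‖gradient (u t) x + gradient φ₁ x‖ ^ p
              + p * ‖gradient (u t) x‖ ^ (p - 2) *
                  (inner ℝ (gradient (u t) x) (gradient φ₁ x) : ℝ)| ≤
            C * R ^ (p - 1) *
              sSup ((fun z : EuclideanSpace ℝ (Fin N) =>
                  ‖z‖ ^ σ * |φ₂ z - φ₁ z|
                    + ‖z‖ ^ (σ + 1) * ‖gradient φ₂ z - gradient φ₁ z‖) ''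
                (ball (0 : EuclideanSpace ℝ (Fin N)) 1 \ {0})) :=
  stmt_15_general N hN p hp1 hp2 σ hσ u
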